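/- arXiv:2001.09643 — 3 statements merged into one kernel-verified Lean document; each statement's English description precedes it below -/
import Mathlib

section
/- A simplex x of degree n in a simplicial set X has degreewise injective representing map Δ[n] → X if and only if its n+1 vertices xε₀, ..., xεₙ are pairwise distinct. -/
open CategoryTheory Simplicial Opposite MonoidalCategory Limits

/-- The representing map of a simplex is degreewise injective. -/
def SSet.RepInj (X : SSet.{0}) {n : ℕ} (x : X _⦋n⦌) : Prop :=
  ∀ m : SimplexCategoryᵒᵖ, Function.Injective (((SSet.yonedaEquiv (X := X) (n := ⦋n⦌)).symm x).app m)

/-- The `i`-th vertex `x εᵢ` of a simplex. -/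
def SSet.vert (X : SSet.{0}) {n : ℕ} (x : X _⦋n⦌) (i : Fin (n + 1)) : X _⦋0⦌ :=
  X.map (SimplexCategory.const ⦋0⦌ ⦋n⦌ i).op x

/-- A simplex is degenerate if it is obtained from a simplex of strictly
lower degree by the action of an operator. -/
def SSet.IsDegenerate (X : SSet.{0}) {n : ℕ} (x : X _⦋n⦌) : Prop :=
  ∃ (m : ℕ) (_ : m < n) (α : (⦋n⦌ : SimplexCategory) ⟶ ⦋m⦌) (y : X _⦋m⦌),
    X.map α.op y = x

/-- A simplicial set is non-singular if every non-degenerate simplex has a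
degreewise injective representing map. -/
def SSet.NonSingular (X : SSet.{0}) : Prop :=
  ∀ (n : ℕ) (x : X _⦋n⦌), ¬ X.IsDegenerate x → X.RepInj x

open Function

lemma SimplexCategory.const_zero_injective (n : SimplexCategory) :
    Injective (SimplexCategory.const ⦋0⦌ n) :=
  fun _ _ h ↦ congr_toOrderHom_apply h 0

namespace SSet

variable (X : SSet.{0}) {n : ℕ} (x : X _⦋n⦌)

lemma repInj_iff_forall_map_op_injective :
    X.RepInj x ↔ ∀ m : ℕ, Injective fun f : ⦋m⦌ ⟶ ⦋n⦌ ↦ X.map f.op x := by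
  refine ⟨fun h m ↦ ?_, fun h ⟨⟨m⟩⟩ ↦ ?_⟩
  · exact (stdSimplex.objEquiv.injective_comp _).1 (h (op ⦋m⦌))
  · exact (stdSimplex.objEquiv.injective_comp _).2 (h m)

lemma vert_map {m : ℕ} (f : ⦋m⦌ ⟶ ⦋n⦌) (i : Fin (m + 1)) :
    X.vert (X.map f.op x) i = X.vert x (f.toOrderHom i) := by
  rw [vert, vert, ← Functor.map_comp_apply, ← op_comp, SimplexCategory.const_comp]

lemma map_op_injective_of_vert_injective (h : Injective (X.vert x)) (m : ℕ) :
    Injective fun f : ⦋m⦌ ⟶ ⦋n⦌ ↦ X.map f.op x := by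
  intro f g hfg
  ext i : 3
  apply h
  rw [← vert_map, ← vert_map]
  exact congrArg (X.vert · i) hfg

end SSet

/-- A simplex `x` of degree `n` in a simplicial set `X` has degreewise
injective representing map `Δ[n] → X` if and only if its `n+1` vertices
`x ε₀, …, x εₙ` are pairwise distinct. -/
theorem repInj_iff_vertices_injective (X : SSet.{0}) {n : ℕ} (x : X _⦋n⦌) :
    X.RepInj x ↔ Function.Injective (X.vert x) := by
  rw [SSet.repInj_iff_forall_map_op_injective]
  exact ⟨fun h ↦ (h 0).comp (SimplexCategory.const_zero_injective _),
    X.map_op_injective_of_vert_injective x⟩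
end

section
/- In a non-singular simplicial set, a simplex is non-degenerate if and only if its vertices are pairwise distinct. -/
open CategoryTheory Simplicial Opposite MonoidalCategory Limits

/-! The vertices of `x` are the values of its representing map on the vertices of `Δ[n]`, so
injectivity of that map in degree `0` is injectivity of `i ↦ x εᵢ`. Conversely, a degenerate
simplex `x = y α` with `α : [n] → [m]`, `m < n`, has `x εᵢ = y ε_{α i}`, and `α` identifies two
vertices since it cannot be injective. -/

namespace SSet

variable (X : SSet.{0})

lemma vert_map_s3 {n m : ℕ} (α : (⦋n⦌ : SimplexCategory) ⟶ ⦋m⦌) (y : X _⦋m⦌) (i : Fin (n + 1)) :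
    X.vert (X.map α.op y) i = X.vert y (α.toOrderHom i) := by
  simp only [vert, ← Functor.map_comp_apply, ← op_comp, SimplexCategory.const_comp]

lemma vert_injective_of_repInj {n : ℕ} {x : X _⦋n⦌} (hx : X.RepInj x) :
    Function.Injective (X.vert x) := by
  intro i j hij
  have hconst : SimplexCategory.const ⦋0⦌ ⦋n⦌ i = SimplexCategory.const ⦋0⦌ ⦋n⦌ j :=
    stdSimplex.objEquiv.symm.injective (hx (op ⦋0⦌) hij)
  simpa using congrArg (fun f => f.toOrderHom 0) hconst

lemma not_isDegenerate_of_vert_injective {n : ℕ} {x : X _⦋n⦌}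
    (hx : Function.Injective (X.vert x)) : ¬ X.IsDegenerate x := by
  rintro ⟨m, hmn, α, y, rfl⟩
  have hα : Function.Injective α.toOrderHom := fun i j hij =>
    hx (by rw [vert_map_s3, vert_map_s3, hij])
  have : Mono α := SimplexCategory.mono_iff_injective.mpr hα
  have : n ≤ m := SimplexCategory.len_le_of_mono α
  omega

end SSet

/-- In a non-singular simplicial set, a simplex is non-degenerate
if and only if its vertices are pairwise distinct. -/
theorem nondegenerate_iff_vertices_injective (X : SSet.{0}) (hX : X.NonSingular)
    {n : ℕ} (x : X _⦋n⦌) :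
    ¬ X.IsDegenerate x ↔ Function.Injective (X.vert x) :=
  ⟨fun hx => X.vert_injective_of_repInj (hX n x hx), X.not_isDegenerate_of_vert_injective⟩
end

section
/- The category of non-singular simplicial sets does not admit a subobject classifier: there is no non-singular simplicial set Ω with a map t : Δ[0] → Ω classifying monomorphisms, because Ω would have exactly two vertices, hence be at most 1-dimensional, and could not classify the subobjects of Δ[2]. -/
open CategoryTheory Simplicial Opposite MonoidalCategory Limits

/-- The category of non-singular simplicial sets, as a full subcategory of
`SSet`. -/
abbrev NsSet : Type 1 := CategoryTheory.ObjectProperty.FullSubcategory SSet.NonSingular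

/-!
Maps `Δ[n] ⟶ Ω` are the `n`-simplices of `Ω` and, through the classifier, the subcomplexes of
`Δ[n]`. Since `Δ[0]` has only two subcomplexes, `Ω` has at most two vertices, and since the
vertices of a non-degenerate simplex of a non-singular simplicial set are pairwise distinct,
every 2-simplex of `Ω` is degenerate. Hence the map classifying `∂Δ[2] ⊆ Δ[2]` factors through
some `σⱼ : Δ[2] ⟶ Δ[1]`, so `∂Δ[2]` is the preimage of a subcomplex `S` of `Δ[1]`. But the face
`δⱼ` lies in `∂Δ[2]`, so `σⱼ δⱼ = 𝟙` lies in `S`, forcing `S = Δ[1]` and `∂Δ[2] = Δ[2]`.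
-/

universe u

namespace SSet

lemma boundary_ne_preimage_stdSimplex_σ {n : ℕ} (S : (Δ[n] : SSet.{u}).Subcomplex)
    (j : Fin (n + 1)) : S.preimage (SSet.stdSimplex.map (SimplexCategory.σ j)) ≠ ∂Δ[n + 1] := by
  intro h
  have hface : stdSimplex.objEquiv.symm (SimplexCategory.δ j.castSucc) ∈
      (∂Δ[n + 1] : (Δ[n + 1] : SSet.{u}).Subcomplex).obj (op ⦋n⦌) := by
    rw [boundary_obj_eq_univ n (n + 1)]
    trivial
  rw [← h] at hface
  have hid : stdSimplex.objEquiv.symm (𝟙 _) ∈ S.obj (op ⦋n⦌) := by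
    rw [← SimplexCategory.δ_comp_σ_self (i := j)]
    exact hface
  apply stdSimplex.notMem_boundary (n + 1)
  rw [← h]
  exact S.map (SimplexCategory.σ j).op hid

lemma stdSimplex_zero_subcomplex_ext {S T : (Δ[0] : SSet.{u}).Subcomplex}
    (h : (S.obj (op ⦋0⦌)).Nonempty ↔ (T.obj (op ⦋0⦌)).Nonempty) : S = T := by
  have mem_iff (R : (Δ[0] : SSet.{u}).Subcomplex) (k : SimplexCategoryᵒᵖ) (x : Δ[0].obj k) :
      x ∈ R.obj k ↔ (R.obj (op ⦋0⦌)).Nonempty := by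
    refine ⟨fun hx => ⟨_, R.map (SimplexCategory.const ⦋0⦌ k.unop 0).op hx⟩,
      fun ⟨y, hy⟩ => ?_⟩
    obtain rfl : x = Δ[0].map (SimplexCategory.isTerminalZero.from k.unop).op y :=
      stdSimplex.objEquiv.injective (SimplexCategory.isTerminalZero.hom_ext _ _)
    exact R.map _ hy
  ext k x
  rw [mem_iff S, mem_iff T, h]

variable {X : SSet.{0}}

lemma isDegenerate_iff_mem_degenerate {n : ℕ} (x : X _⦋n⦌) :
    X.IsDegenerate x ↔ x ∈ X.degenerate n := Iff.rfl

lemma nonSingular_iff_nonsingular : X.NonSingular ↔ X.Nonsingular := by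
  simp only [NonSingular, RepInj, isDegenerate_iff_mem_degenerate, ← mono_iff_injective,
    ← NatTrans.mono_iff_mono_app]
  exact ⟨fun h => ⟨fun x => h _ _ x.2⟩, fun h _ x hx => h.mono ⟨x, hx⟩⟩

lemma Nonsingular.vert_injective [X.Nonsingular] {n : ℕ} {x : X _⦋n⦌}
    (hx : x ∈ X.nonDegenerate n) : Function.Injective (X.vert x) := fun i j hij => by
  simpa using congr_arg (fun f => f.toOrderHom 0) (Nonsingular.injective_map x hx hij)

lemma Nonsingular.nonDegenerate_eq_empty_of_card_le [X.Nonsingular] [Finite (X _⦋0⦌)] {n : ℕ}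
    (h : Nat.card (X _⦋0⦌) ≤ n) : X.nonDegenerate n = ∅ := by
  refine Set.eq_empty_of_forall_notMem fun x hx => ?_
  have := Nat.card_le_card_of_injective _ (vert_injective hx)
  simp only [Nat.card_eq_fintype_card, Fintype.card_fin] at this
  omega

end SSet

def ClassifiesMonos {C : Type*} [Category C] [HasTerminal C] {Ω : C} (t : ⊤_ C ⟶ Ω) : Prop :=
  ∀ (U A : C) (m : U ⟶ A), Mono m → ∃! χ : A ⟶ Ω, IsPullback m (terminal.from U) χ t

namespace NsSet

instance (X : NsSet) : X.obj.Nonsingular := SSet.nonSingular_iff_nonsingular.1 X.property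

def ofSubcomplex {B : NsSet} (S : B.obj.Subcomplex) : NsSet :=
  ⟨S, SSet.nonSingular_iff_nonsingular.2 inferInstance⟩

def subcomplexι {B : NsSet} (S : B.obj.Subcomplex) : ofSubcomplex S ⟶ B :=
  ObjectProperty.homMk S.ι

instance {B : NsSet} (S : B.obj.Subcomplex) : Mono (subcomplexι S) :=
  (ObjectProperty.ι SSet.NonSingular).mono_of_mono_map (inferInstanceAs (Mono S.ι))

def stdSimplex (n : ℕ) : NsSet := ⟨Δ[n], SSet.nonSingular_iff_nonsingular.2 inferInstance⟩

def stdSimplexMap {m n : ℕ} (f : ⦋m⦌ ⟶ ⦋n⦌) : stdSimplex m ⟶ stdSimplex n :=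
  ObjectProperty.homMk (SSet.stdSimplex.map f)

def ofSimplex {X : NsSet} {n : ℕ} (x : X.obj _⦋n⦌) : stdSimplex n ⟶ X :=
  ObjectProperty.homMk (SSet.yonedaEquiv.symm x)

lemma ofSimplex_injective {X : NsSet} {n : ℕ} :
    Function.Injective (ofSimplex (X := X) (n := n)) :=
  fun _ _ h => SSet.yonedaEquiv.symm.injective (congr_arg InducedCategory.Hom.hom h)

lemma ofSimplex_surjective {X : NsSet} {n : ℕ} (χ : stdSimplex n ⟶ X) :
    ∃ x, ofSimplex x = χ :=
  ⟨SSet.yonedaEquiv χ.hom, ObjectProperty.hom_ext _ (SSet.yonedaEquiv.symm_apply_apply _)⟩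

lemma ofSimplex_σ {X : NsSet} {n : ℕ} (x : X.obj _⦋n⦌) (j : Fin (n + 1)) :
    ofSimplex (X.obj.σ j x) = stdSimplexMap (SimplexCategory.σ j) ≫ ofSimplex x :=
  ObjectProperty.hom_ext _ (SSet.stdSimplex.σ_comp_yonedaEquiv_symm x j).symm

variable [HasTerminal NsSet] {Ω : NsSet} (t : ⊤_ NsSet ⟶ Ω)

def trueLocus {B : NsSet} (χ : B ⟶ Ω) : B.obj.Subcomplex where
  obj m := {x | χ.hom.app m x = (terminal.from B ≫ t).hom.app m x}
  map {U V} i x hx := by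
    simp only [Set.mem_preimage, Set.mem_ofPred_eq, NatTrans.naturality_apply] at hx ⊢
    rw [hx]

lemma trueLocus_comp {A B : NsSet} (f : A ⟶ B) (χ : B ⟶ Ω) :
    trueLocus t (f ≫ χ) = (trueLocus t χ).preimage f.hom := by
  ext m x
  simp only [trueLocus, Set.mem_ofPred_eq, ← terminal.comp_from f]
  rfl

lemma range_le_trueLocus_iff {A B : NsSet} (f : A ⟶ B) (χ : B ⟶ Ω) :
    Subfunctor.range f.hom ≤ trueLocus t χ ↔ f ≫ χ = f ≫ terminal.from B ≫ t := by
  constructor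
  · intro h
    apply ObjectProperty.hom_ext
    ext m y
    exact h m ⟨y, rfl⟩
  · rintro h m _ ⟨y, rfl⟩
    exact ConcreteCategory.congr_hom (congr_app (congr_arg InducedCategory.Hom.hom h) m) y

lemma isPullback_trueLocus {B : NsSet} (χ : B ⟶ Ω) :
    IsPullback (subcomplexι (trueLocus t χ)) (terminal.from _) χ t := by
  have comm : subcomplexι (trueLocus t χ) ≫ χ = terminal.from _ ≫ t := by
    rw [← terminal.comp_from (subcomplexι _), Category.assoc]
    exact (range_le_trueLocus_iff t _ χ).1 (Subfunctor.range_ι _).le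
  let lift (s : PullbackCone χ t) : s.pt ⟶ ofSubcomplex (trueLocus t χ) :=
    ObjectProperty.homMk <| Subfunctor.lift s.fst.hom <| (range_le_trueLocus_iff t _ χ).2 <| by
      rw [s.condition, terminal.hom_ext s.snd (s.fst ≫ terminal.from B), Category.assoc]
  have lift_ι (s : PullbackCone χ t) : lift s ≫ subcomplexι _ = s.fst := rfl
  refine IsPullback.of_isLimit' ⟨comm⟩ (PullbackCone.IsLimit.mk comm lift lift_ι
    (fun _ => terminal.hom_ext _ _) fun s m hm _ => ?_)
  exact (cancel_mono (subcomplexι _)).1 (hm.trans (lift_ι s).symm)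

lemma trueLocus_eq_of_isPullback {B : NsSet} {S : B.obj.Subcomplex} {χ : B ⟶ Ω}
    (h : IsPullback (subcomplexι S) (terminal.from _) χ t) : trueLocus t χ = S := by
  refine le_antisymm ?_ <| (Subfunctor.range_ι S).ge.trans <|
    (range_le_trueLocus_iff t (subcomplexι S) χ).2 ?_
  · have fac := h.isoIsPullback_inv_fst _ _ (isPullback_trueLocus t χ)
    calc trueLocus t χ = Subfunctor.range (subcomplexι (trueLocus t χ)).hom :=
          (Subfunctor.range_ι _).symm
      _ ≤ Subfunctor.range (subcomplexι S).hom := by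
          rw [← fac]
          exact Subfunctor.range_comp_le _ _
      _ = S := Subfunctor.range_ι _
  · rw [← Category.assoc, terminal.comp_from]
    exact h.w

end NsSet

namespace ClassifiesMonos

open NsSet

variable [HasTerminal NsSet] {Ω : NsSet} {t : ⊤_ NsSet ⟶ Ω}

lemma exists_trueLocus_eq (hΩ : ClassifiesMonos t) {B : NsSet} (S : B.obj.Subcomplex) :
    ∃ χ : B ⟶ Ω, trueLocus t χ = S :=
  have ⟨χ, hχ, _⟩ := hΩ _ _ (subcomplexι S) inferInstance
  ⟨χ, trueLocus_eq_of_isPullback t hχ⟩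

lemma trueLocus_injective (hΩ : ClassifiesMonos t) {B : NsSet} :
    Function.Injective (trueLocus t (B := B)) := by
  intro χ₁ χ₂ h
  obtain ⟨χ, -, huniq⟩ := hΩ _ _ (subcomplexι (trueLocus t χ₁)) inferInstance
  have h₂ := isPullback_trueLocus t χ₂
  rw [← h] at h₂
  exact (huniq χ₁ (isPullback_trueLocus t χ₁)).trans (huniq χ₂ h₂).symm

lemma nonDegenerate_two_eq_empty (hΩ : ClassifiesMonos t) : Ω.obj.nonDegenerate 2 = ∅ := by
  let vertexToProp (w : Ω.obj _⦋0⦌) : Prop := ((trueLocus t (ofSimplex w)).obj (op ⦋0⦌)).Nonempty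
  have hinj : Function.Injective vertexToProp := fun _ _ h => ofSimplex_injective <|
    hΩ.trueLocus_injective <| SSet.stdSimplex_zero_subcomplex_ext (Iff.of_eq h)
  have := Finite.of_injective _ hinj
  refine SSet.Nonsingular.nonDegenerate_eq_empty_of_card_le ?_
  simpa [Nat.card_eq_fintype_card, Fintype.card_prop] using Nat.card_le_card_of_injective _ hinj

end ClassifiesMonos

/-- The category of non-singular simplicial sets does not admit
a subobject classifier: there is no non-singular simplicial set `Ω` together
with a monomorphism `t : 1 → Ω` such that every monomorphism is a pullback of
`t` in a unique way. -/
theorem nsSet_no_subobject_classifier [HasTerminal NsSet] :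
    ¬ ∃ (Ω : NsSet) (t : ⊤_ NsSet ⟶ Ω),
        Mono t ∧
          ∀ (U A : NsSet) (m : U ⟶ A), Mono m →
            ∃! χ : A ⟶ Ω, IsPullback m (terminal.from U) χ t := by
  rintro ⟨Ω, t, -, hΩ : ClassifiesMonos t⟩
  obtain ⟨χ, hχ⟩ := hΩ.exists_trueLocus_eq (B := NsSet.stdSimplex 2) ∂Δ[2]
  obtain ⟨ω, rfl⟩ := NsSet.ofSimplex_surjective χ
  have hω : ω ∈ Ω.obj.degenerate 2 := by
    simp [SSet.mem_degenerate_iff_notMem_nonDegenerate, hΩ.nonDegenerate_two_eq_empty]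
  rw [SSet.degenerate_eq_iUnion_range_σ, Set.mem_iUnion] at hω
  obtain ⟨j, y, rfl⟩ := hω
  rw [NsSet.ofSimplex_σ, NsSet.trueLocus_comp] at hχ
  exact SSet.boundary_ne_preimage_stdSimplex_σ _ j hχ
end
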